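/- Let ℋ₂ = ℋ₁ = ℂ² and let {T₁, T₂} be an extremal two-outcome quantum 1-tester on ℂ²⊗ℂ² whose normalization is T₁ + T₂ = I₂⊗ρ with rank(ρ) = 2. Then the pair of ranks (rank T₁, rank T₂) is (1,3), (3,1), or (2,2). -/

import Mathlib

/-!
Since `ρ` has full rank, `T₁ + T₂ = 1 ⊗ ρ` is invertible, so `rank T₁ + rank T₂ ≥ 4`. On the
other hand, extremality forbids a common vector `v` in the ranges of `T₁` and `T₂`: a small
multiple `D` of `|v⟩⟨v|` lies below both, and `(T₁ ± D, T₂ ∓ D)` are testers with midpoint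
`(T₁, T₂)`. Hence the ranges are independent and `rank T₁ + rank T₂ ≤ 4`. Finally neither outcome
vanishes: otherwise the other one is `1 ⊗ ρ`, and perturbing `ρ` by a small traceless `±σ` again
splits the tester.
-/

open Matrix Kronecker
open scoped ComplexOrder

/-- A quantum 1-tester with `M` outcomes on `ℋ₂ ⊗ ℋ₁`: a family of positive semidefinite
operators summing to `I₂ ⊗ ρ` for some density operator `ρ` on `ℋ₁`. -/
def IsTester (d₂ d₁ M : ℕ)
    (T : Fin M → Matrix (Fin d₂ × Fin d₁) (Fin d₂ × Fin d₁) ℂ) : Prop :=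
  (∀ i, (T i).PosSemidef) ∧
    ∃ ρ : Matrix (Fin d₁) (Fin d₁) ℂ, ρ.PosSemidef ∧ ρ.trace = 1 ∧
      ∑ i, T i = (1 : Matrix (Fin d₂) (Fin d₂) ℂ) ⊗ₖ ρ

open scoped MatrixOrder

namespace Matrix

section Rank

variable {m n K : Type*} [Fintype n] [Field K]

theorem rank_add_le (A B : Matrix m n K) : (A + B).rank ≤ A.rank + B.rank := by
  unfold rank
  calc Module.finrank K (LinearMap.range (A + B).mulVecLin)
      ≤ Module.finrank K ↥(LinearMap.range A.mulVecLin ⊔ LinearMap.range B.mulVecLin) :=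
        Submodule.finrank_mono (mulVecLin_add A B ▸ LinearMap.range_add_le _ _)
    _ ≤ _ := Submodule.finrank_add_le_finrank_add_finrank _ _

theorem rank_add_rank_le_card_of_disjoint [Fintype m] {A B : Matrix m n K}
    (h : Disjoint (LinearMap.range A.mulVecLin) (LinearMap.range B.mulVecLin)) :
    A.rank + B.rank ≤ Fintype.card m := by
  have := Submodule.finrank_sup_add_finrank_inf_eq (LinearMap.range A.mulVecLin)
    (LinearMap.range B.mulVecLin)
  rw [h.eq_bot, finrank_bot, add_zero] at this
  unfold rank
  rw [← this, ← Module.finrank_fintype_fun_eq_card K]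
  exact Submodule.finrank_le _

theorem rank_eq_zero_iff {A : Matrix m n K} : A.rank = 0 ↔ A = 0 := by
  classical
  rw [rank, Submodule.finrank_eq_zero, LinearMap.range_eq_bot, ← toLin'_apply',
    map_eq_zero_iff _ toLin'.injective]

theorem isUnit_of_rank_eq_card [DecidableEq n] {A : Matrix n n K} (h : A.rank = Fintype.card n) :
    IsUnit A := by
  rw [← mulVec_surjective_iff_isUnit]
  refine (LinearMap.range_eq_top (f := A.mulVecLin)).1 (Submodule.eq_top_of_finrank_eq ?_)
  rw [← rank, h, Module.finrank_fintype_fun_eq_card]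

end Rank

theorem kronecker_sub {l m n p R : Type*} [NonUnitalNonAssocRing R] (A : Matrix l m R)
    (B C : Matrix n p R) : A ⊗ₖ (B - C) = A ⊗ₖ B - A ⊗ₖ C := by
  ext
  simp [mul_sub]

variable {n : Type*} [Fintype n] [DecidableEq n]

open scoped Matrix.Norms.L2Operator in
theorem exists_pos_smul_vecMulVec_le {T : Matrix n n ℂ} (hT : 0 ≤ T) {v : n → ℂ}
    (hv : v ∈ LinearMap.range T.mulVecLin) :
    ∃ c : ℝ, 0 < c ∧ c • vecMulVec v (star v) ≤ T := by
  obtain ⟨w, rfl⟩ := hv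
  set S := CFC.sqrt T
  have hS : S.IsHermitian := (CFC.sqrt_nonneg T).isSelfAdjoint
  have hSS : S * S = T := CFC.sqrt_mul_sqrt_self T hT
  set P := vecMulVec (S *ᵥ w) (star (S *ᵥ w))
  have hfactor : vecMulVec (T *ᵥ w) (star (T *ᵥ w)) = S * P * S := by
    simp only [← hSS, P, mul_vecMulVec, vecMulVec_mul, star_mulVec, ← mulVec_mulVec,
      vecMul_vecMul, hS.eq]
  have hle : S * P * S ≤ ‖P‖ • T := by
    have := CStarAlgebra.star_left_conjugate_le_norm_smul (a := S)
      (posSemidef_vecMulVec_self_star (S *ᵥ w)).isHermitian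
    rwa [star_eq_conjTranspose, hS.eq, hSS] at this
  refine ⟨(‖P‖ + 1)⁻¹, by positivity, ?_⟩
  rw [mulVecLin_apply, hfactor]
  calc (‖P‖ + 1)⁻¹ • (S * P * S) ≤ (‖P‖ + 1)⁻¹ • (‖P‖ • T) := by gcongr
    _ = (‖P‖ / (‖P‖ + 1)) • T := by rw [smul_smul, inv_mul_eq_div]
    _ ≤ T := smul_le_of_le_one_left hT ((div_le_one (by positivity)).2 (by linarith))

theorem PosDef.exists_traceless_perturbation {ρ : Matrix n n ℂ} (hρ : ρ.PosDef) {i j : n}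
    (hij : i ≠ j) : ∃ σ : Matrix n n ℂ, σ ≠ 0 ∧ σ.trace = 0 ∧
      (ρ + σ).PosSemidef ∧ (ρ - σ).PosSemidef := by
  have hE : ∀ k, ∃ c : ℝ, 0 < c ∧ c • (single k k 1 : Matrix n n ℂ) ≤ ρ := by
    intro k
    obtain ⟨w, hw⟩ := mulVec_surjective_iff_isUnit.2 hρ.isUnit (Pi.single k 1)
    simpa [single_eq_single_vecMulVec_single] using
      exists_pos_smul_vecMulVec_le hρ.posSemidef.nonneg ⟨w, hw⟩
  obtain ⟨cᵢ, hcᵢ, hi⟩ := hE i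
  obtain ⟨cⱼ, hcⱼ, hj⟩ := hE j
  have hsingle : ∀ k, 0 ≤ (single k k 1 : Matrix n n ℂ) := fun k ↦ by
    simpa [single_eq_single_vecMulVec_single] using
      (posSemidef_vecMulVec_self_star (Pi.single k (1 : ℂ))).nonneg
  set c := min cᵢ cⱼ
  have hc : 0 < c := lt_min hcᵢ hcⱼ
  have hci : c • single i i (1 : ℂ) ≤ ρ :=
    (smul_le_smul_of_nonneg_right (min_le_left _ _) (hsingle i)).trans hi
  have hcj : c • single j j (1 : ℂ) ≤ ρ :=
    (smul_le_smul_of_nonneg_right (min_le_right _ _) (hsingle j)).trans hj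
  refine ⟨c • (single i i 1 - single j j 1 : Matrix n n ℂ), ?_, ?_, ?_, ?_⟩
  · intro h
    have := congrFun (congrFun h i) i
    simp [hij.symm, hc.ne'] at this
  · simp
  · rw [← nonneg_iff_posSemidef,
      show ρ + c • (single i i 1 - single j j 1) = (ρ - c • single j j 1) + c • single i i 1 by
        rw [smul_sub]; abel]
    exact add_nonneg (sub_nonneg.2 hcj) (smul_nonneg hc.le (hsingle i))
  · rw [← nonneg_iff_posSemidef,
      show ρ - c • (single i i 1 - single j j 1) = (ρ - c • single i i 1) + c • single j j 1 by
        rw [smul_sub]; abel]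
    exact add_nonneg (sub_nonneg.2 hci) (smul_nonneg hc.le (hsingle j))

end Matrix

theorem eq_zero_of_add_mem_of_sub_mem {𝕜 E : Type*} [Field 𝕜] [LinearOrder 𝕜]
    [IsStrictOrderedRing 𝕜] [AddCommGroup E] [Module 𝕜 E] {A : Set E} {x d : E}
    (hx : x ∈ A.extremePoints 𝕜) (hadd : x + d ∈ A) (hsub : x - d ∈ A) : d = 0 := by
  have hmid : x ∈ openSegment 𝕜 (x + d) (x - d) :=
    ⟨1 / 2, 1 / 2, by norm_num, by norm_num, by norm_num, by module⟩
  simpa using hx.2 hadd hsub hmid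

section Tester

variable {d₂ d₁ : ℕ} {T₁ T₂ : Matrix (Fin d₂ × Fin d₁) (Fin d₂ × Fin d₁) ℂ}

theorem isTester_two_iff : IsTester d₂ d₁ 2 ![T₁, T₂] ↔ T₁.PosSemidef ∧ T₂.PosSemidef ∧
    ∃ ρ : Matrix (Fin d₁) (Fin d₁) ℂ, ρ.PosSemidef ∧ ρ.trace = 1 ∧
      T₁ + T₂ = (1 : Matrix (Fin d₂) (Fin d₂) ℂ) ⊗ₖ ρ := by
  simp [IsTester, Fin.forall_fin_two, Fin.sum_univ_two, and_assoc]

theorem eq_zero_of_mem_extremePoints_isTester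
    (hext : ![T₁, T₂] ∈ {W | IsTester d₂ d₁ 2 W}.extremePoints ℝ)
    {D₁ D₂ : Matrix (Fin d₂ × Fin d₁) (Fin d₂ × Fin d₁) ℂ}
    (hadd : IsTester d₂ d₁ 2 ![T₁ + D₁, T₂ + D₂])
    (hsub : IsTester d₂ d₁ 2 ![T₁ - D₁, T₂ - D₂]) : D₁ = 0 ∧ D₂ = 0 := by
  have := eq_zero_of_add_mem_of_sub_mem hext (d := ![D₁, D₂]) (by simpa) (by simpa)
  simpa using this

theorem disjoint_range_of_mem_extremePoints
    (hext : ![T₁, T₂] ∈ {W | IsTester d₂ d₁ 2 W}.extremePoints ℝ) :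
    Disjoint (LinearMap.range T₁.mulVecLin) (LinearMap.range T₂.mulVecLin) := by
  obtain ⟨hT₁, hT₂, ρ, hρ, hρtr, hsum⟩ := isTester_two_iff.1 hext.1
  rw [Submodule.disjoint_def]
  intro v hv₁ hv₂
  obtain ⟨c₁, hc₁, h₁⟩ := exists_pos_smul_vecMulVec_le hT₁.nonneg hv₁
  obtain ⟨c₂, hc₂, h₂⟩ := exists_pos_smul_vecMulVec_le hT₂.nonneg hv₂
  have hvv : 0 ≤ vecMulVec v (star v) := (posSemidef_vecMulVec_self_star v).nonneg
  set D := min c₁ c₂ • vecMulVec v (star v)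
  have hD : 0 ≤ D := smul_nonneg (le_min hc₁.le hc₂.le) hvv
  have hD₁ : D ≤ T₁ := (smul_le_smul_of_nonneg_right (min_le_left _ _) hvv).trans h₁
  have hD₂ : D ≤ T₂ := (smul_le_smul_of_nonneg_right (min_le_right _ _) hvv).trans h₂
  have hD0 : D = 0 := by
    refine (eq_zero_of_mem_extremePoints_isTester hext (D₁ := D) (D₂ := -D) ?_ ?_).1
    · refine isTester_two_iff.2 ⟨?_, ?_, ρ, hρ, hρtr, by rw [← hsum]; abel⟩
      · exact nonneg_iff_posSemidef.1 (add_nonneg hT₁.nonneg hD)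
      · exact nonneg_iff_posSemidef.1 (by simpa [← sub_eq_add_neg] using hD₂)
    · refine isTester_two_iff.2 ⟨?_, ?_, ρ, hρ, hρtr, by rw [← hsum]; abel⟩
      · exact nonneg_iff_posSemidef.1 (sub_nonneg.2 hD₁)
      · exact nonneg_iff_posSemidef.1 (by simpa using add_nonneg hT₂.nonneg hD)
  simpa [D, (lt_min hc₁ hc₂).ne'] using hD0

theorem ne_zero_of_mem_extremePoints [NeZero d₂]
    (hext : ![T₁, T₂] ∈ {W | IsTester d₂ d₁ 2 W}.extremePoints ℝ)
    {ρ : Matrix (Fin d₁) (Fin d₁) ℂ} (hnorm : T₁ + T₂ = (1 : Matrix (Fin d₂) (Fin d₂) ℂ) ⊗ₖ ρ)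
    (hρ : ρ.PosDef) (hρtr : ρ.trace = 1) {i j : Fin d₁} (hij : i ≠ j) :
    T₁ ≠ 0 ∧ T₂ ≠ 0 := by
  obtain ⟨σ, hσ, hσtr, hadd, hsub⟩ := hρ.exists_traceless_perturbation hij
  have hσ' : (1 : Matrix (Fin d₂) (Fin d₂) ℂ) ⊗ₖ σ ≠ 0 := by
    refine fun h ↦ hσ (ext fun a b ↦ ?_)
    simpa using congrFun (congrFun h (0, a)) (0, b)
  have htr : (ρ + σ).trace = 1 ∧ (ρ - σ).trace = 1 := by
    simp [trace_add, trace_sub, hρtr, hσtr]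
  have hpair : ∀ τ : Matrix (Fin d₁) (Fin d₁) ℂ, τ.PosSemidef → τ.trace = 1 →
      IsTester d₂ d₁ 2 ![0, 1 ⊗ₖ τ] ∧ IsTester d₂ d₁ 2 ![1 ⊗ₖ τ, 0] := fun τ hτ hτtr ↦
    ⟨isTester_two_iff.2 ⟨.zero, PosSemidef.one.kronecker hτ, τ, hτ, hτtr, zero_add _⟩,
      isTester_two_iff.2 ⟨PosSemidef.one.kronecker hτ, .zero, τ, hτ, hτtr, add_zero _⟩⟩
  constructor
  · rintro rfl
    rw [zero_add] at hnorm
    subst hnorm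
    refine hσ' (eq_zero_of_mem_extremePoints_isTester hext (D₁ := 0) ?_ ?_).2
    · simpa [kronecker_add] using (hpair _ hadd htr.1).1
    · simpa [kronecker_sub] using (hpair _ hsub htr.2).1
  · rintro rfl
    rw [add_zero] at hnorm
    subst hnorm
    refine hσ' (eq_zero_of_mem_extremePoints_isTester hext (D₂ := 0) ?_ ?_).1
    · simpa [kronecker_add] using (hpair _ hadd htr.1).2
    · simpa [kronecker_sub] using (hpair _ hsub htr.2).2

end Tester

theorem stmt_13_general (T₁ T₂ : Matrix (Fin 2 × Fin 2) (Fin 2 × Fin 2) ℂ)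
    (ρ : Matrix (Fin 2) (Fin 2) ℂ)
    (hρ : ρ.PosSemidef) (hρtr : ρ.trace = 1) (hρrank : ρ.rank = 2)
    (hnorm : T₁ + T₂ = (1 : Matrix (Fin 2) (Fin 2) ℂ) ⊗ₖ ρ)
    (hext : ![T₁, T₂] ∈ {W | IsTester 2 2 2 W}.extremePoints ℝ) :
    (T₁.rank, T₂.rank) = (1, 3) ∨ (T₁.rank, T₂.rank) = (3, 1) ∨
      (T₁.rank, T₂.rank) = (2, 2) := by
  have hρdef : ρ.PosDef :=
    hρ.posDef_iff_isUnit.2 (isUnit_of_rank_eq_card (by simpa using hρrank))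
  have hlower : 4 ≤ T₁.rank + T₂.rank := by
    have hfull : (T₁ + T₂).rank = 4 := by
      rw [hnorm, rank_of_isUnit _ (PosDef.one.kronecker hρdef).isUnit]
      simp
    exact hfull ▸ rank_add_le T₁ T₂
  have hupper : T₁.rank + T₂.rank ≤ 4 := by
    simpa using rank_add_rank_le_card_of_disjoint (disjoint_range_of_mem_extremePoints hext)
  obtain ⟨hT₁, hT₂⟩ :=
    ne_zero_of_mem_extremePoints hext hnorm hρdef hρtr (i := 0) (j := 1) (by decide)
  have h₁ : T₁.rank ≠ 0 := rank_eq_zero_iff.not.2 hT₁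
  have h₂ : T₂.rank ≠ 0 := rank_eq_zero_iff.not.2 hT₂
  simp only [Prod.mk.injEq]
  omega

theorem stmt_13 (T₁ T₂ : Matrix (Fin 2 × Fin 2) (Fin 2 × Fin 2) ℂ)
    (ρ : Matrix (Fin 2) (Fin 2) ℂ)
    (hρ : ρ.PosSemidef) (hρtr : ρ.trace = 1) (hρrank : ρ.rank = 2)
    (h₁ : T₁.PosSemidef) (h₂ : T₂.PosSemidef)
    (hnorm : T₁ + T₂ = (1 : Matrix (Fin 2) (Fin 2) ℂ) ⊗ₖ ρ)
    (hext : ![T₁, T₂] ∈ {W | IsTester 2 2 2 W}.extremePoints ℝ) :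
    (T₁.rank, T₂.rank) = (1, 3) ∨ (T₁.rank, T₂.rank) = (3, 1) ∨
      (T₁.rank, T₂.rank) = (2, 2) :=
  stmt_13_general T₁ T₂ ρ hρ hρtr hρrank hnorm hext
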